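/- Let D ⊆ ℝ² be open and φ : D → ℝ a C^2 function satisfying the time-like ZMC equation (1 − φ_y²)φ_xx + 2φ_xφ_yφ_xy + (1 − φ_x²)φ_yy = 0 with φ_x² + φ_y² > 1 on D, and suppose ψ : D → ℝ is C^2 with ψ_x = −φ_y/√(φ_x²+φ_y²−1) and ψ_y = φ_x/√(φ_x²+φ_y²−1). Then ψ also satisfies the ZMC equation (1 − ψ_y²)ψ_xx + 2ψ_xψ_yψ_xy + (1 − ψ_x²)ψ_yy = 0 and 1 − ψ_x² − ψ_y² = −1/(φ_x²+φ_y²−1) < 0, so the graph of ψ is time-like. -/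

import Mathlib

/-!
Write `a = φ_x`, `b = φ_y` and `w = √(a² + b² - 1)`, so that `ψ_x = -b / w` and `ψ_y = a / w`.
The quotient rule gives the second derivatives of `ψ` in terms of those of `φ`, with
`φ_xy = φ_yx` by the symmetry of second derivatives. Substituting them, the ZMC expression of `ψ`
becomes `-a b / w⁵` times the ZMC expression of `φ`, hence vanishes, and
`1 - ψ_x² - ψ_y² = 1 - (a² + b²) / w² = -1 / w²`.
-/

open Filter Topology

/-- Partial derivative in the first variable of a function on ℝ². -/
noncomputable def pdx (f : ℝ × ℝ → ℝ) (p : ℝ × ℝ) : ℝ := deriv (fun t => f (t, p.2)) p.1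
/-- Partial derivative in the second variable of a function on ℝ². -/
noncomputable def pdy (f : ℝ × ℝ → ℝ) (p : ℝ × ℝ) : ℝ := deriv (fun t => f (p.1, t)) p.2

theorem HasDerivAt.div_sqrt_sq_add_sq_sub_one {u a b : ℝ → ℝ} {u' a' b' x : ℝ}
    (hu : HasDerivAt u u' x) (ha : HasDerivAt a a' x) (hb : HasDerivAt b b' x)
    (hS : 0 < a x ^ 2 + b x ^ 2 - 1) :
    HasDerivAt (fun t => u t / √(a t ^ 2 + b t ^ 2 - 1))
      ((u' * (a x ^ 2 + b x ^ 2 - 1) - u x * (a x * a' + b x * b'))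
        / √(a x ^ 2 + b x ^ 2 - 1) ^ 3) x := by
  have hw0 := (Real.sqrt_pos.2 hS).ne'
  have hsqrt := (((ha.fun_pow 2).fun_add (hb.fun_pow 2)).sub_const 1).sqrt hS.ne'
  refine (hu.fun_div hsqrt hw0).congr_deriv ?_
  have hw := Real.sq_sqrt hS.le
  field_simp
  norm_num [hw]
  ring

section Partials

variable {f g : ℝ × ℝ → ℝ} {p : ℝ × ℝ}

theorem hasDerivAt_pdx (hf : DifferentiableAt ℝ f p) :
    HasDerivAt (fun t => f (t, p.2)) (pdx f p) p.1 :=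
  (hf.comp p.1 (differentiableAt_id.prodMk (differentiableAt_const p.2))).hasDerivAt

theorem hasDerivAt_pdy (hf : DifferentiableAt ℝ f p) :
    HasDerivAt (fun t => f (p.1, t)) (pdy f p) p.2 :=
  (hf.comp p.2 ((differentiableAt_const p.1).prodMk differentiableAt_id)).hasDerivAt

theorem pdx_eq_fderiv (hf : DifferentiableAt ℝ f p) : pdx f p = fderiv ℝ f p (1, 0) :=
  (hasDerivAt_pdx hf).unique <|
    hf.hasFDerivAt.comp_hasDerivAt p.1 ((hasDerivAt_id p.1).prodMk (hasDerivAt_const p.1 p.2))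

theorem pdy_eq_fderiv (hf : DifferentiableAt ℝ f p) : pdy f p = fderiv ℝ f p (0, 1) :=
  (hasDerivAt_pdy hf).unique <|
    hf.hasFDerivAt.comp_hasDerivAt p.2 ((hasDerivAt_const p.2 p.1).prodMk (hasDerivAt_id p.2))

theorem Filter.EventuallyEq.pdx_eq (h : f =ᶠ[𝓝 p] g) : pdx f p = pdx g p :=
  (h.comp_tendsto ((continuous_id.prodMk continuous_const).tendsto' p.1 p rfl)).deriv_eq

theorem Filter.EventuallyEq.pdy_eq (h : f =ᶠ[𝓝 p] g) : pdy f p = pdy g p :=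
  (h.comp_tendsto ((continuous_const.prodMk continuous_id).tendsto' p.2 p rfl)).deriv_eq

theorem ContDiffAt.eventually_differentiableAt {n : WithTop ℕ∞} (hf : ContDiffAt ℝ n f p)
    (hn : 1 ≤ n) : ∀ᶠ q in 𝓝 p, DifferentiableAt ℝ f q :=
  ((hf.of_le hn).eventually (by simp)).mono fun _ hq => hq.differentiableAt one_ne_zero

theorem pdx_eventuallyEq_fderiv {n : WithTop ℕ∞} (hf : ContDiffAt ℝ n f p) (hn : 1 ≤ n) :
    pdx f =ᶠ[𝓝 p] fun q => fderiv ℝ f q (1, 0) :=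
  (hf.eventually_differentiableAt hn).mono fun _ hq => pdx_eq_fderiv hq

theorem pdy_eventuallyEq_fderiv {n : WithTop ℕ∞} (hf : ContDiffAt ℝ n f p) (hn : 1 ≤ n) :
    pdy f =ᶠ[𝓝 p] fun q => fderiv ℝ f q (0, 1) :=
  (hf.eventually_differentiableAt hn).mono fun _ hq => pdy_eq_fderiv hq

theorem contDiffAt_pdx {n : WithTop ℕ∞} (hf : ContDiffAt ℝ (n + 1) f p) :
    ContDiffAt ℝ n (pdx f) p :=
  (hf.fderiv_right_succ.clm_apply contDiffAt_const).congr_of_eventuallyEq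
    (pdx_eventuallyEq_fderiv hf le_add_self)

theorem contDiffAt_pdy {n : WithTop ℕ∞} (hf : ContDiffAt ℝ (n + 1) f p) :
    ContDiffAt ℝ n (pdy f) p :=
  (hf.fderiv_right_succ.clm_apply contDiffAt_const).congr_of_eventuallyEq
    (pdy_eventuallyEq_fderiv hf le_add_self)

theorem pdx_pdy_comm (hf : ContDiffAt ℝ 2 f p) : pdx (pdy f) p = pdy (pdx f) p := by
  have hf' : DifferentiableAt ℝ (fderiv ℝ f) p :=
    (hf.fderiv_right (m := 1) le_rfl).differentiableAt one_ne_zero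
  have hx : HasFDerivAt (fun q => fderiv ℝ f q (1, 0))
      ((fderiv ℝ (fderiv ℝ f) p).flip (1, 0)) p := by
    simpa using hf'.hasFDerivAt.clm_apply (hasFDerivAt_const ((1 : ℝ), (0 : ℝ)) p)
  have hy : HasFDerivAt (fun q => fderiv ℝ f q (0, 1))
      ((fderiv ℝ (fderiv ℝ f) p).flip (0, 1)) p := by
    simpa using hf'.hasFDerivAt.clm_apply (hasFDerivAt_const ((0 : ℝ), (1 : ℝ)) p)
  rw [(pdy_eventuallyEq_fderiv hf one_le_two).pdx_eq,
    (pdx_eventuallyEq_fderiv hf one_le_two).pdy_eq, pdx_eq_fderiv hy.differentiableAt,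
    pdy_eq_fderiv hx.differentiableAt, hx.fderiv, hy.fderiv]
  exact hf.isSymmSndFDerivAt (by simp) (1, 0) (0, 1)

end Partials

noncomputable def zmcOperator (f : ℝ × ℝ → ℝ) (p : ℝ × ℝ) : ℝ :=
  (1 - pdy f p ^ 2) * pdx (pdx f) p + 2 * pdx f p * pdy f p * pdy (pdx f) p
    + (1 - pdx f p ^ 2) * pdy (pdy f) p

theorem one_sub_sq_sub_sq_dual {a b : ℝ} (hS : 0 < a ^ 2 + b ^ 2 - 1) :
    1 - (-b / √(a ^ 2 + b ^ 2 - 1)) ^ 2 - (a / √(a ^ 2 + b ^ 2 - 1)) ^ 2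
      = -(1 / (a ^ 2 + b ^ 2 - 1)) := by
  rw [div_pow, div_pow, Real.sq_sqrt hS.le]
  field_simp
  ring

theorem zmcOperator_dual {φ ψ : ℝ × ℝ → ℝ} {p : ℝ × ℝ} (hφ : ContDiffAt ℝ 2 φ p)
    (hS : 0 < pdx φ p ^ 2 + pdy φ p ^ 2 - 1)
    (hψx : pdx ψ =ᶠ[𝓝 p] fun q => -pdy φ q / √(pdx φ q ^ 2 + pdy φ q ^ 2 - 1))
    (hψy : pdy ψ =ᶠ[𝓝 p] fun q => pdx φ q / √(pdx φ q ^ 2 + pdy φ q ^ 2 - 1)) :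
    zmcOperator ψ p
      = -(pdx φ p * pdy φ p) / √(pdx φ p ^ 2 + pdy φ p ^ 2 - 1) ^ 5 * zmcOperator φ p := by
  have ha : DifferentiableAt ℝ (pdx φ) p :=
    (contDiffAt_pdx (n := 1) hφ).differentiableAt one_ne_zero
  have hb : DifferentiableAt ℝ (pdy φ) p :=
    (contDiffAt_pdy (n := 1) hφ).differentiableAt one_ne_zero
  have hxx := hψx.pdx_eq.trans ((hasDerivAt_pdx hb).fun_neg.div_sqrt_sq_add_sq_sub_one
    (hasDerivAt_pdx ha) (hasDerivAt_pdx hb) hS).deriv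
  have hxy := hψx.pdy_eq.trans ((hasDerivAt_pdy hb).fun_neg.div_sqrt_sq_add_sq_sub_one
    (hasDerivAt_pdy ha) (hasDerivAt_pdy hb) hS).deriv
  have hyy := hψy.pdy_eq.trans ((hasDerivAt_pdy ha).div_sqrt_sq_add_sq_sub_one
    (hasDerivAt_pdy ha) (hasDerivAt_pdy hb) hS).deriv
  simp only [Prod.mk.eta] at hxx hxy hyy
  unfold zmcOperator
  rw [hψx.eq_of_nhds, hψy.eq_of_nhds, hxx, hxy, hyy, pdx_pdy_comm hφ]
  set w := √(pdx φ p ^ 2 + pdy φ p ^ 2 - 1)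
  have hw : w ^ 2 = pdx φ p ^ 2 + pdy φ p ^ 2 - 1 := Real.sq_sqrt hS.le
  have hw0 : w ≠ 0 := (Real.sqrt_pos.2 hS).ne'
  rw [div_pow, div_pow, show w ^ 5 = w ^ 3 * w ^ 2 by ring, hw]
  set a := pdx φ p
  set b := pdy φ p
  field_simp
  linear_combination
    2 * a * b * (pdy (pdy φ) p + a * b * pdy (pdx φ) p - a ^ 2 * pdy (pdy φ) p) * hw

theorem stmt_5_general (D : Set (ℝ × ℝ)) (hD : IsOpen D) (φ ψ : ℝ × ℝ → ℝ)
    (hφ : ContDiffOn ℝ 2 φ D)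
    (htl : ∀ p ∈ D, 1 < (pdx φ p) ^ 2 + (pdy φ p) ^ 2)
    (hzmc : ∀ p ∈ D,
      (1 - (pdy φ p) ^ 2) * pdx (pdx φ) p
        + 2 * pdx φ p * pdy φ p * pdy (pdx φ) p
        + (1 - (pdx φ p) ^ 2) * pdy (pdy φ) p = 0)
    (hdx : ∀ p ∈ D, pdx ψ p = -(pdy φ p) / Real.sqrt ((pdx φ p) ^ 2 + (pdy φ p) ^ 2 - 1))
    (hdy : ∀ p ∈ D, pdy ψ p = pdx φ p / Real.sqrt ((pdx φ p) ^ 2 + (pdy φ p) ^ 2 - 1)) :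
    ∀ p ∈ D,
      ((1 - (pdy ψ p) ^ 2) * pdx (pdx ψ) p
        + 2 * pdx ψ p * pdy ψ p * pdy (pdx ψ) p
        + (1 - (pdx ψ p) ^ 2) * pdy (pdy ψ) p = 0) ∧
      (1 - (pdx ψ p) ^ 2 - (pdy ψ p) ^ 2 = -(1 / ((pdx φ p) ^ 2 + (pdy φ p) ^ 2 - 1))) ∧
      (1 - (pdx ψ p) ^ 2 - (pdy ψ p) ^ 2 < 0) := by
  intro p hp
  have hpD : D ∈ 𝓝 p := hD.mem_nhds hp
  have hS : 0 < pdx φ p ^ 2 + pdy φ p ^ 2 - 1 := by linarith [htl p hp]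
  have htime : 1 - pdx ψ p ^ 2 - pdy ψ p ^ 2 = -(1 / (pdx φ p ^ 2 + pdy φ p ^ 2 - 1)) := by
    rw [hdx p hp, hdy p hp]
    exact one_sub_sq_sub_sq_dual hS
  have hzmcψ : zmcOperator ψ p = 0 := by
    rw [zmcOperator_dual (hφ.contDiffAt hpD) hS (eventually_of_mem hpD hdx)
      (eventually_of_mem hpD hdy), zmcOperator, hzmc p hp, mul_zero]
  refine ⟨hzmcψ, htime, ?_⟩
  rw [htime, neg_lt_zero]
  exact one_div_pos.2 hS

theorem stmt_5 (D : Set (ℝ × ℝ)) (hD : IsOpen D) (φ ψ : ℝ × ℝ → ℝ)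
    (hφ : ContDiffOn ℝ 2 φ D) (hψ : ContDiffOn ℝ 2 ψ D)
    (htl : ∀ p ∈ D, 1 < (pdx φ p) ^ 2 + (pdy φ p) ^ 2)
    (hzmc : ∀ p ∈ D,
      (1 - (pdy φ p) ^ 2) * pdx (pdx φ) p
        + 2 * pdx φ p * pdy φ p * pdy (pdx φ) p
        + (1 - (pdx φ p) ^ 2) * pdy (pdy φ) p = 0)
    (hdx : ∀ p ∈ D, pdx ψ p = -(pdy φ p) / Real.sqrt ((pdx φ p) ^ 2 + (pdy φ p) ^ 2 - 1))
    (hdy : ∀ p ∈ D, pdy ψ p = pdx φ p / Real.sqrt ((pdx φ p) ^ 2 + (pdy φ p) ^ 2 - 1)) :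
    ∀ p ∈ D,
      ((1 - (pdy ψ p) ^ 2) * pdx (pdx ψ) p
        + 2 * pdx ψ p * pdy ψ p * pdy (pdx ψ) p
        + (1 - (pdx ψ p) ^ 2) * pdy (pdy ψ) p = 0) ∧
      (1 - (pdx ψ p) ^ 2 - (pdy ψ p) ^ 2 = -(1 / ((pdx φ p) ^ 2 + (pdy φ p) ^ 2 - 1))) ∧
      (1 - (pdx ψ p) ^ 2 - (pdy ψ p) ^ 2 < 0) :=
  stmt_5_general D hD φ ψ hφ htl hzmc hdx hdy
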